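/- Let n ≥ 3 be a natural number, let b > 0, and set λ* = n(n−1)b²/6. Define H(t,r) = (4πt)^{−n/2} · (b r / sin(b r))^{(n−1)/2} · exp(−r²/(4t)) · exp(λ* t). Then for every t > 0 and every r with 0 < r < π/b, one has ∂_t H(t,r) − ∂²_{rr} H(t,r) − (n−1) b (cos(b r)/sin(b r)) ∂_r H(t,r) ≥ 0; that is, H is a supersolution of the radial heat equation on the round sphere of curvature b². -/

import Mathlib

open Real

private lemma nonneg_of_deriv (f f' : ℝ → ℝ) (hf : ∀ x, HasDerivAt f (f' x) x)
    (h0 : f 0 = 0) (hf' : ∀ x, 0 ≤ x → 0 ≤ f' x) : ∀ x, 0 ≤ x → 0 ≤ f x := by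
  intro x hx
  have hdiff : Differentiable ℝ f := fun y => (hf y).differentiableAt
  have hmono : MonotoneOn f (Set.Ici (0:ℝ)) := by
    apply monotoneOn_of_deriv_nonneg (convex_Ici 0) hdiff.continuous.continuousOn
      hdiff.differentiableOn
    intro y hy
    rw [(hf y).deriv]
    exact hf' y (le_of_lt (by simpa using hy))
  have := hmono Set.self_mem_Ici hx hx
  simpa [h0] using this

private lemma sin_ge_cubic (x : ℝ) (hx : 0 ≤ x) : x - x^3/6 ≤ Real.sin x := by
  have := nonneg_of_deriv (fun x => Real.sin x - (x - x^3/6))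
    (fun x => Real.cos x - (1 - x^2/2))
    (fun x => by
      exact ((Real.hasDerivAt_sin x).sub
        ((hasDerivAt_id x).sub (((hasDerivAt_pow 3 x)).div_const 6))).congr_deriv (by ring))
    (by simp)
    (fun x _ => by
      have := Real.one_sub_sq_div_two_le_cos (x := x); linarith)
    x hx
  linarith

private lemma cos_le_quartic (x : ℝ) (hx : 0 ≤ x) : Real.cos x ≤ 1 - x^2/2 + x^4/24 := by
  have := nonneg_of_deriv (fun x => 1 - x^2/2 + x^4/24 - Real.cos x)
    (fun x => -x + x^3/6 + Real.sin x)
    (fun x => by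
      have h1 : HasDerivAt (fun x : ℝ => 1 - x^2/2 + x^4/24 - Real.cos x)
          (0 - (2*x^(2-1))/2 + (4*x^(4-1))/24 - (-Real.sin x)) x := by
        exact ((((hasDerivAt_const x (1:ℝ)).sub ((hasDerivAt_pow 2 x).div_const 2)).add
          ((hasDerivAt_pow 4 x).div_const 24)).sub (Real.hasDerivAt_cos x))
      exact h1.congr_deriv (by norm_num; ring)
      )
    (by norm_num)
    (fun x hx => by have := sin_ge_cubic x hx; linarith)
    x hx
  linarith

private lemma sin_le_quintic (x : ℝ) (hx : 0 ≤ x) : Real.sin x ≤ x - x^3/6 + x^5/120 := by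
  have := nonneg_of_deriv (fun x => x - x^3/6 + x^5/120 - Real.sin x)
    (fun x => 1 - x^2/2 + x^4/24 - Real.cos x)
    (fun x => by
      have h1 : HasDerivAt (fun x : ℝ => x - x^3/6 + x^5/120 - Real.sin x)
          (1 - (3*x^(3-1))/6 + (5*x^(5-1))/120 - Real.cos x) x := by
        exact (((hasDerivAt_id x).sub ((hasDerivAt_pow 3 x).div_const 6)).add
          ((hasDerivAt_pow 5 x).div_const 120)).sub (Real.hasDerivAt_sin x)
      exact h1.congr_deriv (by norm_num; ring))
    (by norm_num)
    (fun x hx => by have := cos_le_quartic x hx; linarith)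
    x hx
  linarith

private lemma key_trig {x : ℝ} (hx : 0 < x) (hxpi : x < π) :
    1/3 ≤ 1/(Real.sin x)^2 - 1/x^2 := by
  have hs : 0 < Real.sin x := Real.sin_pos_of_pos_of_lt_pi hx hxpi
  have hx2 : (0:ℝ) < x^2 := by positivity
  have hs2 : (0:ℝ) < (Real.sin x)^2 := by positivity
  have num : 0 ≤ 3*x^2 - 3*(Real.sin x)^2 - x^2*(Real.sin x)^2 := by
    rcases le_or_gt (x^2) (3/2) with h | h
    · have hq := sin_le_quintic x hx.le
      have h2 : (Real.sin x)^2 ≤ (x - x^3/6 + x^5/120)^2 := by nlinarith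
      have hid : 3*x^2 - 3*(x - x^3/6 + x^5/120)^2 - x^2*(x - x^3/6 + x^5/120)^2
          = x^6*(1/5 - 13/360*x^2 + 37/14400*x^4 - 1/14400*x^6) := by ring
      have hy : 0 ≤ x^2 := sq_nonneg x
      have hcube : x^2*(x^2*x^2) ≤ (3/2)*((3/2)*(3/2)) := by
        have h1 : x^2*x^2 ≤ (3/2)*(3/2) := mul_le_mul h h hy (by norm_num)
        exact mul_le_mul h h1 (by positivity) (by norm_num)
      have hbr : 0 ≤ 1/5 - 13/360*x^2 + 37/14400*x^4 - 1/14400*x^6 := by nlinarith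
      have h6 : 0 ≤ x^6 := by positivity
      nlinarith [mul_nonneg h6 hbr]
    · have hs1sq : (Real.sin x)^2 ≤ 1 := by nlinarith [Real.sin_le_one x]
      have hxs : x^2*(Real.sin x)^2 ≤ x^2*1 := mul_le_mul_of_nonneg_left hs1sq hx2.le
      nlinarith
  have heq : 1/(Real.sin x)^2 - 1/x^2 - 1/3
      = (3*x^2 - 3*(Real.sin x)^2 - x^2*(Real.sin x)^2)/(3*x^2*(Real.sin x)^2) := by
    field_simp
  have : 0 ≤ 1/(Real.sin x)^2 - 1/x^2 - 1/3 := by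
    rw [heq]; positivity
  linarith


set_option maxHeartbeats 1000000 in
theorem heat_kernel_comparison_supersolution (n : ℕ) (hn : 3 ≤ n) (b : ℝ) (hb : 0 < b)
    (lam : ℝ) (hlam : lam = (n : ℝ) * ((n : ℝ) - 1) * b ^ 2 / 6)
    (H : ℝ → ℝ → ℝ)
    (hH : ∀ t r, H t r =
      (4 * π * t) ^ (-(n : ℝ) / 2) * (b * r / Real.sin (b * r)) ^ (((n : ℝ) - 1) / 2)
        * Real.exp (-r ^ 2 / (4 * t)) * Real.exp (lam * t)) :
    ∀ t : ℝ, 0 < t → ∀ r : ℝ, 0 < r → r < π / b →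
      deriv (fun s => H s r) t - deriv (deriv (fun ρ => H t ρ)) r
        - ((n : ℝ) - 1) * b * (Real.cos (b * r) / Real.sin (b * r))
          * deriv (fun ρ => H t ρ) r ≥ 0 := by
  intro t ht r hr hrpi
  have hq3 : (3:ℝ) ≤ (n:ℝ) := by exact_mod_cast hn
  set q : ℝ := (n:ℝ) with hqdef
  have hπ : (0:ℝ) < π := pi_pos
  have htne : t ≠ 0 := ht.ne'
  have hrne : r ≠ 0 := hr.ne'
  have hbr : 0 < b * r := mul_pos hb hr
  have hbrpi : b * r < π := by
    have := (lt_div_iff₀ hb).mp hrpi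
    linarith [this, mul_comm r b]
  have hsin : 0 < Real.sin (b * r) := Real.sin_pos_of_pos_of_lt_pi hbr hbrpi
  have hsinne : Real.sin (b * r) ≠ 0 := hsin.ne'
  have h4πt : (0:ℝ) < 4 * π * t := by positivity
  -- positivity of H
  have hHpos : 0 < H t r := by
    rw [hH]
    have h1 := Real.rpow_pos_of_pos h4πt (-q / 2)
    have h2 := Real.rpow_pos_of_pos (div_pos hbr hsin) ((q - 1) / 2)
    positivity
  ------------------------------------------------------------------
  -- time derivative
  ------------------------------------------------------------------
  set ut : ℝ := -q / (2 * t) + r ^ 2 / (4 * t ^ 2) + lam with hut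
  set φ : ℝ → ℝ := fun s => (-q / 2) * Real.log (4 * π * s) + (-(r ^ 2) / 4) * s⁻¹ + lam * s
    with hφdef
  set C1 : ℝ := (b * r / Real.sin (b * r)) ^ ((q - 1) / 2) with hC1
  have hEq_t : ∀ s ∈ Set.Ioi (0:ℝ), H s r = C1 * Real.exp (φ s) := by
    intro s hs
    simp only [Set.mem_Ioi] at hs
    rw [hH]
    simp only [hφdef]
    have h1 : (4 * π * s) ^ (-q / 2) = Real.exp ((-q / 2) * Real.log (4 * π * s)) := by
      rw [Real.rpow_def_of_pos (by positivity), mul_comm]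
    have h2 : (-(r ^ 2) / 4) * s⁻¹ = -r ^ 2 / (4 * s) := by field_simp
    rw [h1, ← h2, Real.exp_add, Real.exp_add, hC1]
    ring
  have hφd : HasDerivAt φ ((-q / 2) * ((4 * π) / (4 * π * t)) + (-(r ^ 2) / 4) * (-(t ^ 2)⁻¹)
      + lam * 1) t := by
    have hlog4 : HasDerivAt (fun s : ℝ => Real.log (4 * π * s)) ((4 * π) / (4 * π * t)) t := by
      have h1 : HasDerivAt (fun s : ℝ => 4 * π * s) (4 * π) t := by
        simpa using (hasDerivAt_id t).const_mul (4 * π)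
      exact h1.log (ne_of_gt h4πt)
    have hinv : HasDerivAt (fun s : ℝ => s⁻¹) (-(t ^ 2)⁻¹) t := hasDerivAt_inv ht.ne'
    exact ((hlog4.const_mul (-q / 2)).add (hinv.const_mul (-(r ^ 2) / 4))).add
      ((hasDerivAt_id t).const_mul lam)
  have hdt : HasDerivAt (fun s => H s r) (H t r * ut) t := by
    have hmain : HasDerivAt (fun s => C1 * Real.exp (φ s))
        (C1 * (Real.exp (φ t) * ((-q / 2) * ((4 * π) / (4 * π * t))
          + (-(r ^ 2) / 4) * (-(t ^ 2)⁻¹) + lam * 1))) t := (hφd.exp).const_mul C1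
    have hev : (fun s => H s r) =ᶠ[nhds t] (fun s => C1 * Real.exp (φ s)) :=
      Filter.eventuallyEq_of_mem (Ioi_mem_nhds ht) hEq_t
    refine (hmain.congr_of_eventuallyEq hev).congr_deriv ?_
    rw [hEq_t t (Set.mem_Ioi.mpr ht), hut]
    have hπne : π ≠ 0 := hπ.ne'
    field_simp
  ------------------------------------------------------------------
  -- first space derivative on the interval
  ------------------------------------------------------------------
  set w : ℝ → ℝ := fun ρ => (q - 1) / 2 * (ρ⁻¹ - b * Real.cos (b * ρ) / Real.sin (b * ρ))
      - ρ / (2 * t) with hwdef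
  set C2 : ℝ := (4 * π * t) ^ (-q / 2) * Real.exp (lam * t) with hC2
  set ψ : ℝ → ℝ := fun ρ => (q - 1) / 2 * (Real.log (b * ρ) - Real.log (Real.sin (b * ρ)))
      + (-(1 / (4 * t))) * ρ ^ 2 with hψdef
  have hEq_r : ∀ ρ ∈ Set.Ioo (0:ℝ) (π / b), H t ρ = C2 * Real.exp (ψ ρ) := by
    intro ρ hρ
    obtain ⟨hρ0, hρπ⟩ := hρ
    have hbρ : 0 < b * ρ := mul_pos hb hρ0
    have hbρπ : b * ρ < π := by
      have := (lt_div_iff₀ hb).mp hρπ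
      linarith [this, mul_comm ρ b]
    have hsρ : 0 < Real.sin (b * ρ) := Real.sin_pos_of_pos_of_lt_pi hbρ hbρπ
    rw [hH]
    simp only [hψdef]
    have h1 : (b * ρ / Real.sin (b * ρ)) ^ ((q - 1) / 2)
        = Real.exp ((q - 1) / 2 * (Real.log (b * ρ) - Real.log (Real.sin (b * ρ)))) := by
      rw [Real.rpow_def_of_pos (div_pos hbρ hsρ), Real.log_div hbρ.ne' hsρ.ne', mul_comm]
    have h2 : (-(1 / (4 * t))) * ρ ^ 2 = -ρ ^ 2 / (4 * t) := by field_simp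
    rw [h1, hC2, Real.exp_add, ← h2]
    ring
  have hwd : ∀ ρ ∈ Set.Ioo (0:ℝ) (π / b), HasDerivAt (fun ρ => H t ρ) (H t ρ * w ρ) ρ := by
    intro ρ hρ
    obtain ⟨hρ0, hρπ⟩ := hρ
    have hbρ : 0 < b * ρ := mul_pos hb hρ0
    have hbρπ : b * ρ < π := by
      have := (lt_div_iff₀ hb).mp hρπ
      linarith [this, mul_comm ρ b]
    have hsρ : 0 < Real.sin (b * ρ) := Real.sin_pos_of_pos_of_lt_pi hbρ hbρπ
    have hlin : HasDerivAt (fun x : ℝ => b * x) b ρ := by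
      simpa using (hasDerivAt_id ρ).const_mul b
    have hlogb : HasDerivAt (fun x : ℝ => Real.log (b * x)) (b / (b * ρ)) ρ :=
      hlin.log hbρ.ne'
    have hsind : HasDerivAt (fun x : ℝ => Real.sin (b * x)) (Real.cos (b * ρ) * b) ρ :=
      (Real.hasDerivAt_sin (b * ρ)).comp ρ hlin
    have hlogsin : HasDerivAt (fun x : ℝ => Real.log (Real.sin (b * x)))
        ((Real.cos (b * ρ) * b) / Real.sin (b * ρ)) ρ := hsind.log hsρ.ne'
    have hsq : HasDerivAt (fun x : ℝ => (-(1 / (4 * t))) * x ^ 2) ((-(1 / (4 * t))) * (2 * ρ)) ρ := by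
      have := (hasDerivAt_pow 2 ρ).const_mul (-(1 / (4 * t)))
      simpa [mul_comm] using this
    have hψd : HasDerivAt ψ ((q - 1) / 2 * (b / (b * ρ) - (Real.cos (b * ρ) * b) / Real.sin (b * ρ))
        + (-(1 / (4 * t))) * (2 * ρ)) ρ :=
      ((hlogb.sub hlogsin).const_mul ((q - 1) / 2)).add hsq
    have hmain : HasDerivAt (fun x => C2 * Real.exp (ψ x))
        (C2 * (Real.exp (ψ ρ) * ((q - 1) / 2 * (b / (b * ρ)
          - (Real.cos (b * ρ) * b) / Real.sin (b * ρ)) + (-(1 / (4 * t))) * (2 * ρ)))) ρ :=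
      (hψd.exp).const_mul C2
    have hev : (fun x => H t x) =ᶠ[nhds ρ] (fun x => C2 * Real.exp (ψ x)) :=
      Filter.eventuallyEq_of_mem (Ioo_mem_nhds hρ0 hρπ) hEq_r
    refine (hmain.congr_of_eventuallyEq hev).congr_deriv ?_
    rw [hEq_r ρ ⟨hρ0, hρπ⟩, hwdef]
    have hbne : b ≠ 0 := hb.ne'
    field_simp
    ring
  have hrIoo : r ∈ Set.Ioo (0:ℝ) (π / b) := ⟨hr, hrpi⟩
  have hderiv1val : deriv (fun ρ => H t ρ) r = H t r * w r := (hwd r hrIoo).deriv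
  ------------------------------------------------------------------
  -- second space derivative
  ------------------------------------------------------------------
  set c : ℝ := b * Real.cos (b * r) / Real.sin (b * r) with hc
  have hpy : Real.sin (b * r) ^ 2 + Real.cos (b * r) ^ 2 = 1 := Real.sin_sq_add_cos_sq (b * r)
  have hb2s : b ^ 2 / Real.sin (b * r) ^ 2 = c ^ 2 + b ^ 2 := by
    rw [hc]
    field_simp
    linear_combination (-1) * hpy
  set dw : ℝ := (q - 1) / 2 * (-(r ^ 2)⁻¹ + (c ^ 2 + b ^ 2)) - 1 / (2 * t) with hdw
  have hw' : HasDerivAt w dw r := by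
    have hlin : HasDerivAt (fun x : ℝ => b * x) b r := by
      simpa using (hasDerivAt_id r).const_mul b
    have hcosd : HasDerivAt (fun x : ℝ => b * Real.cos (b * x)) ((-Real.sin (b * r) * b) * b) r := by
      have h1 : HasDerivAt (fun x : ℝ => Real.cos (b * x)) (-Real.sin (b * r) * b) r :=
        (Real.hasDerivAt_cos (b * r)).comp r hlin
      simpa [mul_comm, mul_left_comm] using h1.const_mul b
    have hsind : HasDerivAt (fun x : ℝ => Real.sin (b * x)) (Real.cos (b * r) * b) r :=
      (Real.hasDerivAt_sin (b * r)).comp r hlin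
    have hdivd : HasDerivAt (fun x : ℝ => b * Real.cos (b * x) / Real.sin (b * x))
        (((-Real.sin (b * r) * b) * b * Real.sin (b * r)
          - b * Real.cos (b * r) * (Real.cos (b * r) * b)) / Real.sin (b * r) ^ 2) r :=
      hcosd.div hsind hsinne
    have hinvd : HasDerivAt (fun x : ℝ => x⁻¹) (-(r ^ 2)⁻¹) r := hasDerivAt_inv hrne
    have hlind : HasDerivAt (fun x : ℝ => x / (2 * t)) (1 / (2 * t)) r := by
      simpa using (hasDerivAt_id r).div_const (2 * t)
    have hnum : (-Real.sin (b * r) * b) * b * Real.sin (b * r)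
          - b * Real.cos (b * r) * (Real.cos (b * r) * b) = -(b ^ 2) := by
      linear_combination (-(b ^ 2)) * hpy
    have hfrac : ((-Real.sin (b * r) * b) * b * Real.sin (b * r)
          - b * Real.cos (b * r) * (Real.cos (b * r) * b)) / Real.sin (b * r) ^ 2
        = -(c ^ 2 + b ^ 2) := by
      rw [hnum, neg_div, hb2s]
    have := ((hinvd.sub hdivd).const_mul ((q - 1) / 2)).sub hlind
    refine this.congr_deriv ?_
    rw [hfrac, hdw]
    ring
  have hd2 : HasDerivAt (fun ρ => H t ρ * w ρ) (H t r * w r * w r + H t r * dw) r :=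
    (hwd r hrIoo).mul hw'
  have hderiv2val : deriv (deriv (fun ρ => H t ρ)) r = H t r * w r * w r + H t r * dw := by
    have hev : deriv (fun ρ => H t ρ) =ᶠ[nhds r] (fun ρ => H t ρ * w ρ) :=
      Filter.eventuallyEq_of_mem (Ioo_mem_nhds hr hrpi) (fun ρ hρ => (hwd ρ hρ).deriv)
    rw [hev.deriv_eq]
    exact hd2.deriv
  ------------------------------------------------------------------
  -- conclusion
  ------------------------------------------------------------------
  rw [hdt.deriv, hderiv2val, hderiv1val]
  have hcq : (q - 1) * b * (Real.cos (b * r) / Real.sin (b * r)) = 2 * ((q - 1) / 2) * c := by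
    rw [hc]; ring
  have hbracket : ut - w r * w r - dw - 2 * ((q - 1) / 2) * c * w r
      = (q - 1) / 2 * ((q - 1) / 2 - 1) * (2 * b ^ 2 / 3 + c ^ 2 - (r ^ 2)⁻¹) := by
    simp only [hut, hwdef, hdw, hlam]
    rw [← hc]
    field_simp
    ring
  have hkey := key_trig hbr hbrpi
  have hE : 0 ≤ 2 * b ^ 2 / 3 + c ^ 2 - (r ^ 2)⁻¹ := by
    have h1 : b ^ 2 * (1 / 3) ≤ b ^ 2 * (1 / Real.sin (b * r) ^ 2 - 1 / (b * r) ^ 2) :=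
      mul_le_mul_of_nonneg_left hkey (sq_nonneg b)
    have h2 : b ^ 2 * (1 / (b * r) ^ 2) = (r ^ 2)⁻¹ := by
      rw [mul_pow]
      field_simp
    have h3 : b ^ 2 * (1 / Real.sin (b * r) ^ 2) = c ^ 2 + b ^ 2 := by
      rw [← hb2s]; field_simp
    rw [mul_sub] at h1
    linarith [h1, h2, h3]
  have hm1 : (1:ℝ) ≤ (q - 1) / 2 := by linarith
  have hnonneg : 0 ≤ (q - 1) / 2 * ((q - 1) / 2 - 1) * (2 * b ^ 2 / 3 + c ^ 2 - (r ^ 2)⁻¹) := by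
    apply mul_nonneg (mul_nonneg (by linarith) (by linarith)) hE
  have : H t r * ut - (H t r * w r * w r + H t r * dw)
      - (q - 1) * b * (Real.cos (b * r) / Real.sin (b * r)) * (H t r * w r)
      = H t r * (ut - w r * w r - dw - 2 * ((q - 1) / 2) * c * w r) := by
    rw [hcq]; ring
  rw [this, hbracket]
  exact mul_nonneg hHpos.le hnonneg
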